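/- Every metrically open subset of FIN_k^∞ is H-Ramsey for every semiselective coideal H: if X ⊆ FIN_k^∞ is open in the metric (product) topology and [a,A] ≠ ∅ with A ∈ H, then there is B ∈ [a,A] ∩ H with [a,B] ⊆ X or [a,B] ∩ X = ∅. -/

import Mathlib

open scoped symmDiff

namespace FINkSpace

/-- The support of `p : ℕ → ℕ`. -/
def supp (p : ℕ → ℕ) : Set ℕ := {n | p n ≠ 0}

/-- `p` is an element of `FIN_k`: values at most `k`, finite support, `k` attained. -/
def IsFINk (k : ℕ) (p : ℕ → ℕ) : Prop :=
  (∀ n, p n ≤ k) ∧ (supp p).Finite ∧ ∃ n, p n = k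

/-- The tetris operation `T(p)(n) = max (p n - 1) 0` (truncated subtraction). -/
def tetris (p : ℕ → ℕ) : ℕ → ℕ := fun n => p n - 1

/-- `A` is an infinite block sequence of elements of `FIN_k`. -/
def IsBlockSeq (k : ℕ) (A : ℕ → ℕ → ℕ) : Prop :=
  (∀ n, IsFINk k (A n)) ∧ ∀ n i j, A n i ≠ 0 → A (n + 1) j ≠ 0 → i < j

/-- `p` belongs to the combinatorial span `[B]`:
`p = T^{(i₀)}(B n₀) + ⋯ + T^{(i_l)}(B n_l)` with `n₀ < ⋯ < n_l` and some `i_j = 0`.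
Note `T^{(i)}(q) m = q m - i` (truncated subtraction). -/
def InSpan (k : ℕ) (B : ℕ → ℕ → ℕ) (p : ℕ → ℕ) : Prop :=
  ∃ (l : ℕ) (n : Fin (l + 1) → ℕ) (i : Fin (l + 1) → ℕ),
    StrictMono n ∧ (∀ j, i j ≤ k) ∧ (∃ j, i j = 0) ∧
    p = fun m => ∑ j, (B (n j) m - i j)

/-- `A ≤ B` : `A` is a condensation of `B` (every term of `A` lies in `[B]`). -/
def Cond (k : ℕ) (A B : ℕ → ℕ → ℕ) : Prop := ∀ n, InSpan k B (A n)

/-- `A ≤* B` : all but finitely many terms of `A` lie in `[B]`. -/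
def AlmostCond (k : ℕ) (A B : ℕ → ℕ → ℕ) : Prop := ∃ N, ∀ n, N ≤ n → InSpan k B (A n)

/-- `a` is a finite block sequence of elements of `FIN_k`. -/
def IsFinBlockSeq (k : ℕ) (a : List (ℕ → ℕ)) : Prop :=
  (∀ p ∈ a, IsFINk k p) ∧
  ∀ m, m + 1 < a.length → ∀ i j,
    (a.getD m fun _ => 0) i ≠ 0 → (a.getD (m + 1) fun _ => 0) j ≠ 0 → i < j

/-- `p` belongs to the span of the finite block sequence `a`. -/
def InSpanList (k : ℕ) (a : List (ℕ → ℕ)) (p : ℕ → ℕ) : Prop :=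
  ∃ (l : ℕ) (n : Fin (l + 1) → ℕ) (i : Fin (l + 1) → ℕ),
    StrictMono n ∧ (∀ j, n j < a.length) ∧ (∀ j, i j ≤ k) ∧ (∃ j, i j = 0) ∧
    p = fun m => ∑ j, ((a.getD (n j) fun _ => 0) m - i j)

/-- `rList n A` is the finite block sequence of the first `n` blocks of `A`. -/
def rList (n : ℕ) (A : ℕ → ℕ → ℕ) : List (ℕ → ℕ) := (List.range n).map A

/-- `b ≤_fin a` : every term of the finite block sequence `b` lies in the span of `a`. -/
def LeFin (k : ℕ) (b a : List (ℕ → ℕ)) : Prop :=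
  IsFinBlockSeq k b ∧ ∀ p ∈ b, InSpanList k a p

/-- The Ellentuck-type basic set `[a,A]`. -/
def Basic (k : ℕ) (a : List (ℕ → ℕ)) (A : ℕ → ℕ → ℕ) : Set (ℕ → ℕ → ℕ) :=
  {B | IsBlockSeq k B ∧ rList a.length B = a ∧ Cond k B A}

/-- `depth_A(a)` : the least `n` with `a ≤_fin r_n(A)`. -/
noncomputable def depth (k : ℕ) (A : ℕ → ℕ → ℕ) (a : List (ℕ → ℕ)) : ℕ :=
  sInf {n | ∀ p ∈ a, InSpanList k (rList n A) p}

/-- `a ∈ FIN_k^{<∞} ↾ A` : `a` is a finite block sequence all whose terms lie in `[A]`. -/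
def FinCond (k : ℕ) (a : List (ℕ → ℕ)) (A : ℕ → ℕ → ℕ) : Prop :=
  IsFinBlockSeq k a ∧ ∀ p ∈ a, InSpan k A p

end FINkSpace

namespace FINkSpace

/-- A coideal on `FIN_k^∞` (Definition of coideal in the paper). -/
structure Coideal (k : ℕ) where
  mem : (ℕ → ℕ → ℕ) → Prop
  blockseq : ∀ A, mem A → IsBlockSeq k A
  finiteChanges : ∀ A B, mem A → IsBlockSeq k B → (Set.range A ∆ Set.range B).Finite → mem B
  upward : ∀ A B, mem A → IsBlockSeq k B → Cond k A B → mem B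
  a3_1 : ∀ A, mem A → ∀ a, FinCond k a A →
    ∀ B, mem B → B ∈ Basic k (rList (depth k A a) A) A → (Basic k a B).Nonempty
  a3_2 : ∀ A, mem A → ∀ a, FinCond k a A →
    ∀ B, mem B → Cond k B A → (Basic k a B).Nonempty →
      ∃ A', mem A' ∧ A' ∈ Basic k (rList (depth k A a) A) A ∧
        (Basic k a A').Nonempty ∧ Basic k a A' ⊆ Basic k a B
  a4 : ∀ A, mem A → ∀ a, FinCond k a A → ∀ O : Set (List (ℕ → ℕ)),
    ∃ B, mem B ∧ B ∈ Basic k (rList (depth k A a) A) A ∧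
      ({b | ∃ C ∈ Basic k a B, b = rList (a.length + 1) C} ⊆ O ∨
       {b | ∃ C ∈ Basic k a B, b = rList (a.length + 1) C} ∩ O = ∅)

/-- `D` is dense open in `S` (with respect to the condensation order). -/
def DenseOpenIn (k : ℕ) (D S : Set (ℕ → ℕ → ℕ)) : Prop :=
  D ⊆ S ∧ (∀ A ∈ S, ∃ B ∈ D, Cond k B A) ∧
  ∀ A B, A ∈ S → B ∈ D → Cond k A B → A ∈ D

/-- `H` is a selective coideal. -/
def Selective (k : ℕ) (H : Coideal k) : Prop :=
  ∀ a A, H.mem A → (Basic k a A).Nonempty →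
    ∀ As : ℕ → ℕ → ℕ → ℕ,
      (∀ n, H.mem (As n) ∧ Cond k (As n) A ∧ Cond k (As (n + 1)) (As n) ∧
        (Basic k a (As n)).Nonempty) →
      ∃ B, H.mem B ∧ B ∈ Basic k a A ∧
        ∀ b, FinCond k b B → Basic k b B ⊆ Basic k b (As (depth k A b))

/-- `H` is a semiselective coideal. -/
def Semiselective (k : ℕ) (H : Coideal k) : Prop :=
  ∀ A, H.mem A →
    ∀ D : List (ℕ → ℕ) → Set (ℕ → ℕ → ℕ),
      (∀ a, FinCond k a A →
        DenseOpenIn k (D a) ({B | H.mem B} ∩ Basic k (rList (depth k A a) A) A)) →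
      ∀ C, H.mem C → Cond k C A →
        ∃ B, H.mem B ∧ Cond k B C ∧
          ∃ As : List (ℕ → ℕ) → ℕ → ℕ → ℕ,
            (∀ a, FinCond k a A → As a ∈ D a) ∧
            ∀ a, FinCond k a B → Basic k a B ⊆ Basic k a (As a)

end FINkSpace

namespace FINkSpace

/-!
Since `X` is open, so is `Y = {C | a ⌢ C ∈ X}`; it therefore suffices to homogenise `Y` on
`[∅, B]` and then graft `a` onto a far-out tail of the resulting `B`, which stays in `H` because
`H` is closed under finite changes.

For the root `∅` this is the Galvin–Prikry combinatorics of acceptance and rejection: `B` accepts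
`b` if `[b, B] ⊆ Y`, and rejects `b` if no member of `H ∩ [b, B]` accepts it. Semiselectivity turns
a property that can be achieved below every member of `H` into a property of a single `B` for all
`b` at once. With axiom A3.2 this gives `B₁` accepting or rejecting every `b`; with A4 it gives
`B₂ ≤ B₁` such that whenever `B₂` does not accept `t`, no one-step extension of `t` in `[t, B₂]`
is accepted by `B₁`. If `B₁` accepts `∅` we are done. Otherwise rejection propagates from `∅` to
every prefix `r_n(C)` of every `C ≤ B₂`; but if `C ∈ Y`, openness makes `r_n(C)` accepted by a
member of `H ∩ [r_n(C), B₁]` for large `n`, so `[∅, B₂] ∩ Y = ∅`.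
-/

open Finset

@[simp] lemma length_rList (n : ℕ) (A : ℕ → ℕ → ℕ) : (rList n A).length = n := by
  simp [rList]

@[simp] lemma getElem_rList {n x : ℕ} (A : ℕ → ℕ → ℕ) (h : x < (rList n A).length) :
    (rList n A)[x] = A x := by
  simp [rList]

lemma mem_rList {p : ℕ → ℕ} {n : ℕ} {A : ℕ → ℕ → ℕ} : p ∈ rList n A ↔ ∃ x < n, A x = p := by
  simp [rList]

lemma rList_congr {n : ℕ} {A B : ℕ → ℕ → ℕ} (h : ∀ x < n, A x = B x) :
    rList n A = rList n B :=
  List.map_congr_left fun x hx => h x (List.mem_range.1 hx)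

lemma apply_eq_of_rList_eq {n x : ℕ} {A B : ℕ → ℕ → ℕ} (h : rList n A = rList n B)
    (hx : x < n) : A x = B x := by
  simpa [rList, List.getElem?_range hx] using congrArg (·[x]?) h

lemma rList_eq_of_le {m n : ℕ} {A B : ℕ → ℕ → ℕ} (h : rList n A = rList n B) (hmn : m ≤ n) :
    rList m A = rList m B :=
  rList_congr fun _ hx => apply_eq_of_rList_eq h (hx.trans_le hmn)

def seqAppend (t : List (ℕ → ℕ)) (E : ℕ → ℕ → ℕ) : ℕ → ℕ → ℕ :=
  fun n => if h : n < t.length then t[n] else E (n - t.length)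

def seqDrop (m : ℕ) (E : ℕ → ℕ → ℕ) : ℕ → ℕ → ℕ := fun n => E (m + n)

section seqAppend

variable {t : List (ℕ → ℕ)} {E : ℕ → ℕ → ℕ}

lemma seqAppend_of_lt {n : ℕ} (h : n < t.length) : seqAppend t E n = t[n] := dif_pos h

@[simp] lemma seqAppend_add (n : ℕ) : seqAppend t E (t.length + n) = E n := by
  simp [seqAppend]

@[simp] lemma rList_seqAppend : rList t.length (seqAppend t E) = t :=
  List.ext_getElem (by simp) fun x _ h => by simp [seqAppend_of_lt h]

lemma seqAppend_rList_seqDrop (L : ℕ) (C : ℕ → ℕ → ℕ) :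
    seqAppend (rList L C) (seqDrop L C) = C := by
  funext n
  by_cases h : n < L
  · simp [seqAppend, h]
  · simp [seqAppend, seqDrop, h, Nat.add_sub_cancel' (not_lt.1 h)]

end seqAppend

lemma IsBlockSeq.lt_of_lt {k : ℕ} {A : ℕ → ℕ → ℕ} (hA : IsBlockSeq k A) {x y u v : ℕ}
    (hxy : x < y) (hu : A x u ≠ 0) (hv : A y v ≠ 0) : u < v := by
  induction y, hxy using Nat.le_induction generalizing v with
  | base => exact hA.2 x u v hu hv
  | succ y hxy ih =>
    obtain ⟨w, hw⟩ := (hA.1 y).2.2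
    have hw0 : A y w ≠ 0 := by have := (hA.1 x).1 u; omega
    exact (ih hw0).trans (hA.2 y w v hw0 hv)

lemma IsBlockSeq.disjoint {k : ℕ} {A : ℕ → ℕ → ℕ} (hA : IsBlockSeq k A) {x y : ℕ} (hxy : x ≠ y) :
    Disjoint (supp (A x)) (supp (A y)) := by
  refine Set.disjoint_left.2 fun u hux huy => ?_
  rcases hxy.lt_or_gt with h | h
  · exact lt_irrefl u (hA.lt_of_lt h hux huy)
  · exact lt_irrefl u (hA.lt_of_lt h huy hux)

lemma IsBlockSeq.le_of_ne_zero {k : ℕ} {A : ℕ → ℕ → ℕ} (hA : IsBlockSeq k A) {n v : ℕ}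
    (hv : A n v ≠ 0) : n ≤ v := by
  induction n generalizing v with
  | zero => exact v.zero_le
  | succ n ih =>
    obtain ⟨w, hw⟩ := (hA.1 n).2.2
    have hw0 : A n w ≠ 0 := by have := (hA.1 (n + 1)).1 v; omega
    exact (ih hw0).trans_lt (hA.2 n w v hw0 hv)

lemma IsBlockSeq.eq_of_ne_zero {k : ℕ} {A : ℕ → ℕ → ℕ} (hA : IsBlockSeq k A) {x y m : ℕ}
    (hx : A x m ≠ 0) (hy : A y m ≠ 0) : x = y := by
  by_contra hxy
  exact Set.disjoint_left.1 (hA.disjoint hxy) hx hy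

lemma sum_tsub_of_subsingleton {ι : Type*} (s : Finset ι) (f : ι → ℕ) (c : ℕ)
    (h : ∀ x ∈ s, ∀ y ∈ s, f x ≠ 0 → f y ≠ 0 → x = y) :
    (∑ x ∈ s, f x) - c = ∑ x ∈ s, (f x - c) := by
  by_cases hz : ∃ x ∈ s, f x ≠ 0
  · obtain ⟨x, hxs, hx⟩ := hz
    have hne {y} (hys : y ∈ s) (hyx : y ≠ x) : f y = 0 := by
      by_contra hy
      exact hyx (h y hys x hxs hy hx)
    rw [sum_eq_single_of_mem x hxs fun y hys hyx => hne hys hyx,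
      sum_eq_single_of_mem x hxs fun y hys hyx => by rw [hne hys hyx, zero_tsub]]
  · push Not at hz
    rw [sum_eq_zero hz, sum_eq_zero fun x hx => by rw [hz x hx, zero_tsub], zero_tsub]

/-- Membership in the span `[C]` without the requirement that some block enters untruncated. -/
def InWeakSpan (C : ℕ → ℕ → ℕ) (p : ℕ → ℕ) : Prop :=
  ∃ (S : Finset ℕ) (G : ℕ → ℕ), p = fun m => ∑ y ∈ S, (C y m - G y)

section InWeakSpan

variable {k : ℕ} {C : ℕ → ℕ → ℕ} {p q : ℕ → ℕ}

lemma IsBlockSeq.sum_tsub (hC : IsBlockSeq k C) (S : Finset ℕ) (G : ℕ → ℕ) (m c : ℕ) :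
    (∑ y ∈ S, (C y m - G y)) - c = ∑ y ∈ S, (C y m - (G y + c)) := by
  rw [sum_tsub_of_subsingleton]
  · simp only [tsub_tsub]
  · intro x _ y _ hx hy
    exact hC.eq_of_ne_zero (m := m) (by omega) (by omega)

lemma InWeakSpan.tsub (hC : IsBlockSeq k C) (hp : InWeakSpan C p) (c : ℕ) :
    InWeakSpan C fun m => p m - c := by
  obtain ⟨S, G, rfl⟩ := hp
  exact ⟨S, fun y => G y + c, funext fun m => hC.sum_tsub S G m c⟩

lemma InWeakSpan.exists_nonzero_terms (hp : InWeakSpan C p) :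
    ∃ (S : Finset ℕ) (G : ℕ → ℕ), (∀ y ∈ S, ∃ m, G y < C y m) ∧
      p = fun m => ∑ y ∈ S, (C y m - G y) := by
  classical
  obtain ⟨S, G, rfl⟩ := hp
  refine ⟨S.filter fun y => ∃ m, G y < C y m, G, fun y hy => (mem_filter.1 hy).2, ?_⟩
  funext m
  refine (sum_filter_of_ne fun y _ hy => ?_).symm
  exact ⟨m, by omega⟩

lemma InWeakSpan.add (hp : InWeakSpan C p) (hq : InWeakSpan C q)
    (hpq : Disjoint (supp p) (supp q)) : InWeakSpan C (p + q) := by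
  classical
  obtain ⟨S₁, G₁, hS₁, rfl⟩ := hp.exists_nonzero_terms
  obtain ⟨S₂, G₂, hS₂, rfl⟩ := hq.exists_nonzero_terms
  have hdisj : Disjoint S₁ S₂ := by
    refine Finset.disjoint_left.2 fun y hy₁ hy₂ => ?_
    obtain ⟨m₁, hm₁⟩ := hS₁ y hy₁
    obtain ⟨m₂, hm₂⟩ := hS₂ y hy₂
    have h₁ (m : ℕ) : C y m - G₁ y ≤ ∑ y ∈ S₁, (C y m - G₁ y) :=
      single_le_sum (f := fun y => C y m - G₁ y) (fun _ _ => Nat.zero_le _) hy₁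
    have h₂ (m : ℕ) : C y m - G₂ y ≤ ∑ y ∈ S₂, (C y m - G₂ y) :=
      single_le_sum (f := fun y => C y m - G₂ y) (fun _ _ => Nat.zero_le _) hy₂
    have hboth (m : ℕ) (hp : G₁ y < C y m) (hq : G₂ y < C y m) : False :=
      Set.disjoint_left.1 hpq (show ∑ y ∈ S₁, (C y m - G₁ y) ≠ 0 by have := h₁ m; omega)
        (show ∑ y ∈ S₂, (C y m - G₂ y) ≠ 0 by have := h₂ m; omega)
    rcases le_total (G₁ y) (G₂ y) with h | h
    · exact hboth m₂ (by omega) hm₂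
    · exact hboth m₁ hm₁ (by omega)
  refine ⟨S₁ ∪ S₂, S₁.piecewise G₁ G₂, funext fun m => ?_⟩
  rw [Pi.add_apply, sum_union hdisj]
  congr 1
  · exact sum_congr rfl fun y hy => by rw [piecewise_eq_of_mem _ _ _ hy]
  · exact sum_congr rfl fun y hy => by
      rw [piecewise_eq_of_notMem _ _ _ (Finset.disjoint_right.1 hdisj hy)]

lemma inWeakSpan_sum {ι : Type*} {s : Finset ι} {q : ι → ℕ → ℕ}
    (hq : ∀ x ∈ s, InWeakSpan C (q x))
    (hdisj : (s : Set ι).PairwiseDisjoint fun x => supp (q x)) :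
    InWeakSpan C (∑ x ∈ s, q x) := by
  classical
  induction s using Finset.induction_on with
  | empty => exact ⟨∅, 0, by simp; rfl⟩
  | insert x s hx ih =>
    rw [sum_insert hx]
    refine (hq x (mem_insert_self x s)).add
      (ih (fun y hy => hq y (mem_insert_of_mem hy)) (hdisj.subset (by simp))) ?_
    refine Set.disjoint_left.2 fun m hxm hsm => ?_
    simp only [supp, Set.mem_ofPred_eq, Finset.sum_apply, ne_eq, sum_eq_zero_iff, not_forall] at hsm
    obtain ⟨y, hy, hym⟩ := hsm
    exact Set.disjoint_left.1 (hdisj (mem_insert_self x s) (mem_insert_of_mem hy)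
      (by rintro rfl; exact hx hy)) hxm hym

end InWeakSpan

lemma inSpan_iff_exists_finset {k : ℕ} {C : ℕ → ℕ → ℕ} {p : ℕ → ℕ} :
    InSpan k C p ↔ ∃ (S : Finset ℕ) (G : ℕ → ℕ), (∀ y ∈ S, G y ≤ k) ∧ (∃ y ∈ S, G y = 0) ∧
      p = fun m => ∑ y ∈ S, (C y m - G y) := by
  constructor
  · rintro ⟨l, n, i, hn, hik, ⟨j₀, hj₀⟩, rfl⟩
    have hG (j) : Function.extend n i 0 (n j) = i j := hn.injective.extend_apply i 0 j
    refine ⟨univ.map ⟨n, hn.injective⟩, Function.extend n i 0, ?_, ?_, ?_⟩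
    · simpa [hG] using hik
    · simpa [hG] using ⟨j₀, hj₀⟩
    · simp [hG]
  · rintro ⟨S, G, hGk, ⟨y₀, hy₀, hG₀⟩, rfl⟩
    obtain ⟨l, hl⟩ : ∃ l, S.card = l + 1 := Nat.exists_eq_add_one.2 (card_pos.2 ⟨y₀, hy₀⟩)
    set n := S.orderEmbOfFin hl
    obtain ⟨j₀, hj₀⟩ : y₀ ∈ Set.range n := by rwa [S.range_orderEmbOfFin hl]
    refine ⟨l, n, fun j => G (n j), n.strictMono, fun j => hGk _ (S.orderEmbOfFin_mem hl j),
      ⟨j₀, by simp only [hj₀, hG₀]⟩, funext fun m => ?_⟩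
    rw [← S.map_orderEmbOfFin_univ hl, sum_map]
    rfl

lemma exists_sum_eq_of_subsingleton {ι : Type*} {s : Finset ι} (hs : s.Nonempty) (f : ι → ℕ)
    (h : ∀ x ∈ s, ∀ y ∈ s, f x ≠ 0 → f y ≠ 0 → x = y) : ∃ x ∈ s, ∑ y ∈ s, f y = f x := by
  by_cases hz : ∃ x ∈ s, f x ≠ 0
  · obtain ⟨x, hxs, hx⟩ := hz
    exact ⟨x, hxs, sum_eq_single_of_mem x hxs fun y hys hyx => by
      by_contra hy
      exact hyx (h y hys x hxs hy hx)⟩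
  · push Not at hz
    obtain ⟨x, hxs⟩ := hs
    exact ⟨x, hxs, by rw [sum_eq_zero hz, hz x hxs]⟩

lemma inSpan_iff_inWeakSpan {k : ℕ} {C : ℕ → ℕ → ℕ} {p : ℕ → ℕ} (hC : IsBlockSeq k C) :
    InSpan k C p ↔ InWeakSpan C p ∧ ∃ m, p m = k := by
  have hle (y m : ℕ) : C y m ≤ k := (hC.1 y).1 m
  rw [inSpan_iff_exists_finset]
  constructor
  · rintro ⟨S, G, -, ⟨y₀, hy₀, hG₀⟩, rfl⟩
    obtain ⟨m, hm⟩ := (hC.1 y₀).2.2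
    refine ⟨⟨S, G, rfl⟩, m, show ∑ y ∈ S, (C y m - G y) = k from ?_⟩
    rw [sum_eq_single_of_mem y₀ hy₀ fun y _ hy => ?_, hG₀, hm, tsub_zero]
    by_contra hne
    exact hy (hC.eq_of_ne_zero (m := m) (by omega) (by have := hle y m; omega))
  · rintro ⟨⟨S, G, rfl⟩, m, hm⟩
    rcases S.eq_empty_or_nonempty with rfl | hS
    · refine ⟨{0}, 0, fun _ _ => Nat.zero_le _, ⟨0, mem_singleton_self 0, rfl⟩,
        funext fun m' => ?_⟩
      have := hle 0 m'
      simp only [sum_empty] at hm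
      simp only [sum_empty, sum_singleton, Pi.zero_apply]
      omega
    obtain ⟨y₀, hy₀, hsum⟩ := exists_sum_eq_of_subsingleton hS (fun y => C y m - G y)
      fun x _ y _ hx hy => hC.eq_of_ne_zero (m := m) (by omega) (by omega)
    refine ⟨S, fun y => min (G y) k, fun y _ => min_le_right _ _,
      ⟨y₀, hy₀, show min (G y₀) k = 0 by
        have := hle y₀ m; change ∑ y ∈ S, (C y m - G y) = k at hm; omega⟩, funext fun m' => ?_⟩
    exact sum_congr rfl fun y _ => show C y m' - G y = C y m' - min (G y) k by
      have := hle y m'; omega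

lemma InSpan.inWeakSpan {k : ℕ} {C : ℕ → ℕ → ℕ} {p : ℕ → ℕ} (hp : InSpan k C p) :
    InWeakSpan C p := by
  obtain ⟨S, G, -, -, rfl⟩ := inSpan_iff_exists_finset.1 hp
  exact ⟨S, G, rfl⟩

lemma InSpan.of_cond {k : ℕ} {B C : ℕ → ℕ → ℕ} {p : ℕ → ℕ} (hB : IsBlockSeq k B)
    (hC : IsBlockSeq k C) (hBC : Cond k B C) (hp : InSpan k B p) : InSpan k C p := by
  obtain ⟨⟨s, g, rfl⟩, hk⟩ := (inSpan_iff_inWeakSpan hB).1 hp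
  refine (inSpan_iff_inWeakSpan hC).2 ⟨?_, hk⟩
  have hsum : (fun m => ∑ x ∈ s, (B x m - g x)) = ∑ x ∈ s, fun m => B x m - g x := by
    funext m; simp
  rw [hsum]
  have hsupp (x : ℕ) : supp (fun m => B x m - g x) ⊆ supp (B x) := fun m hm => by
    simp only [supp, Set.mem_ofPred_eq] at hm ⊢; omega
  exact inWeakSpan_sum (fun x _ => (hBC x).inWeakSpan.tsub hC (g x))
    fun x _ y _ hxy => (hB.disjoint hxy).mono (hsupp x) (hsupp y)

lemma Cond.trans {k : ℕ} {A B C : ℕ → ℕ → ℕ} (hB : IsBlockSeq k B) (hC : IsBlockSeq k C)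
    (hAB : Cond k A B) (hBC : Cond k B C) : Cond k A C :=
  fun n => (hAB n).of_cond hB hC hBC

lemma inSpan_self (k : ℕ) (A : ℕ → ℕ → ℕ) (n : ℕ) : InSpan k A (A n) :=
  inSpan_iff_exists_finset.2 ⟨{n}, 0, by simp, by simp, by simp⟩

lemma Cond.refl (k : ℕ) (A : ℕ → ℕ → ℕ) : Cond k A A := inSpan_self k A

lemma InWeakSpan.seqDrop {B : ℕ → ℕ → ℕ} {p : ℕ → ℕ} {L : ℕ} (hp : InWeakSpan B p)
    (hdisj : ∀ x < L, Disjoint (supp p) (supp (B x))) : InWeakSpan (seqDrop L B) p := by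
  obtain ⟨S, G, rfl⟩ := hp
  refine ⟨S.preimage (L + ·) (add_right_injective L).injOn, fun z => G (L + z),
    funext fun m => (sum_preimage (L + ·) S _ (fun y => B y m - G y) fun y hy hyL => ?_).symm⟩
  have hyL : y < L := by
    by_contra h
    exact hyL ⟨y - L, Nat.add_sub_cancel' (not_lt.1 h)⟩
  by_contra hne
  have := single_le_sum (f := fun y => B y m - G y) (fun _ _ => Nat.zero_le _) hy
  exact Set.disjoint_left.1 (hdisj y hyL) (show ∑ y ∈ S, (B y m - G y) ≠ 0 by omega)
    (show B y m ≠ 0 by omega)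

lemma isBlockSeq_seqDrop {k : ℕ} {E : ℕ → ℕ → ℕ} (hE : IsBlockSeq k E) (m : ℕ) :
    IsBlockSeq k (seqDrop m E) :=
  ⟨fun _ => hE.1 _, fun n => hE.2 (m + n)⟩

lemma cond_seqDrop (k m : ℕ) (E : ℕ → ℕ → ℕ) : Cond k (seqDrop m E) E :=
  fun n => inSpan_self k E (m + n)

lemma isBlockSeq_seqAppend {k : ℕ} {t : List (ℕ → ℕ)} {E : ℕ → ℕ → ℕ} (ht : IsFinBlockSeq k t)
    (hE : IsBlockSeq k E) (hsep : ∀ p ∈ t, ∀ u, p u ≠ 0 → ∀ j v, E j v ≠ 0 → u < v) :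
    IsBlockSeq k (seqAppend t E) := by
  have hget {n} (h : n < t.length) : (t.getD n fun _ => 0) = t[n] := List.getD_eq_getElem _ _ h
  refine ⟨fun n => ?_, fun n u v hu hv => ?_⟩
  · by_cases h : n < t.length
    · rw [seqAppend_of_lt h]; exact ht.1 _ (List.getElem_mem h)
    · simpa [seqAppend, h] using hE.1 _
  · by_cases h₁ : n + 1 < t.length
    · rw [seqAppend_of_lt (by omega)] at hu
      rw [seqAppend_of_lt h₁] at hv
      exact ht.2 n h₁ u v (by rwa [hget]) (by rwa [hget])
    by_cases h₂ : n < t.length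
    · rw [seqAppend_of_lt h₂] at hu
      simp only [seqAppend, h₁, dite_false] at hv
      exact hsep _ (List.getElem_mem h₂) u hu _ v hv
    · simp only [seqAppend, h₁, h₂, dite_false] at hu hv
      rw [show n + 1 - t.length = n - t.length + 1 by omega] at hv
      exact hE.2 _ u v hu hv

lemma finite_range_symmDiff_seqAppend (t : List (ℕ → ℕ)) (m : ℕ) (E : ℕ → ℕ → ℕ) :
    (Set.range E ∆ Set.range (seqAppend t (seqDrop m E))).Finite := by
  refine (t.finite_toSet.union ((Set.finite_Iio m).image E)).subset ?_
  rintro p (⟨⟨j, rfl⟩, hj⟩ | ⟨⟨n, rfl⟩, hn⟩)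
  · refine Or.inr ⟨j, Set.mem_Iio.2 (not_le.1 fun hmj => hj ⟨t.length + (j - m), ?_⟩), rfl⟩
    simp [seqDrop, Nat.add_sub_cancel' hmj]
  · by_cases h : n < t.length
    · exact Or.inl (by simp [seqAppend_of_lt h])
    · exact (hn ⟨m + (n - t.length), by simp [seqAppend, h, seqDrop]⟩).elim

lemma getElem_eq_of_rList_eq {t : List (ℕ → ℕ)} {C : ℕ → ℕ → ℕ} {L x : ℕ} (h : rList L C = t)
    (hx : x < t.length) : t[x] = C x := by
  subst h; simp

lemma mem_basic_of_seqDrop {k : ℕ} {t : List (ℕ → ℕ)} {A C : ℕ → ℕ → ℕ} (hC : IsBlockSeq k C)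
    (hpre : rList t.length C = t) (ht : ∀ p ∈ t, InSpan k A p)
    (hdrop : Cond k (seqDrop t.length C) A) : C ∈ Basic k t A := by
  refine ⟨hC, hpre, fun n => ?_⟩
  by_cases h : n < t.length
  · rw [← getElem_eq_of_rList_eq hpre h]; exact ht _ (List.getElem_mem h)
  · simpa [seqDrop, Nat.add_sub_cancel' (not_lt.1 h)] using hdrop (n - t.length)

lemma cond_seqDrop_of_mem_basic {k : ℕ} {t : List (ℕ → ℕ)} {E C : ℕ → ℕ → ℕ}
    (hE : IsBlockSeq k E) (hC : C ∈ Basic k t (seqAppend t E)) :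
    Cond k (seqDrop t.length C) E := by
  obtain ⟨hCb, hpre, hCE⟩ := hC
  intro n
  have hdisj : ∀ x < t.length, Disjoint (supp (C (t.length + n))) (supp (seqAppend t E x)) :=
    fun x hx => by
      rw [seqAppend_of_lt hx, getElem_eq_of_rList_eq hpre hx]
      exact hCb.disjoint (by omega)
  have hw := (hCE (t.length + n)).inWeakSpan.seqDrop hdisj
  rw [show seqDrop t.length (seqAppend t E) = E from funext fun _ => seqAppend_add _] at hw
  exact (inSpan_iff_inWeakSpan hE).2 ⟨hw, (hCb.1 _).2.2⟩

lemma Coideal.exists_mem_prefix {k : ℕ} (H : Coideal k) {E : ℕ → ℕ → ℕ} (hE : H.mem E)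
    {t : List (ℕ → ℕ)} (ht : IsFinBlockSeq k t) :
    ∃ B, H.mem B ∧ rList t.length B = t ∧ ∀ C ∈ Basic k t B, Cond k (seqDrop t.length C) E := by
  have hEb := H.blockseq E hE
  obtain ⟨U, hU⟩ := (t.finite_toSet.biUnion fun p hp => (ht.1 p hp).2.1).bddAbove
  have hE'b := isBlockSeq_seqDrop hEb (U + 1)
  have hB : IsBlockSeq k (seqAppend t (seqDrop (U + 1) E)) :=
    isBlockSeq_seqAppend ht hE'b fun p hp u hu j v hv => by
      have := hU (Set.mem_biUnion hp hu)
      have := hEb.le_of_ne_zero hv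
      omega
  exact ⟨_, H.finiteChanges E _ hE hB (finite_range_symmDiff_seqAppend t _ E), rList_seqAppend,
    fun C hC => (cond_seqDrop_of_mem_basic hE'b hC).trans hE'b hEb (cond_seqDrop k _ E)⟩

lemma inSpanList_rList_iff {k N : ℕ} {A : ℕ → ℕ → ℕ} {p : ℕ → ℕ} :
    InSpanList k (rList N A) p ↔ ∃ (l : ℕ) (n : Fin (l + 1) → ℕ) (i : Fin (l + 1) → ℕ),
      StrictMono n ∧ (∀ j, n j < N) ∧ (∀ j, i j ≤ k) ∧ (∃ j, i j = 0) ∧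
      p = fun m => ∑ j, (A (n j) m - i j) := by
  have hget {x} (hx : x < N) : ((rList N A).getD x fun _ => 0) = A x := by
    rw [List.getD_eq_getElem _ _ (by simpa using hx), getElem_rList]
  unfold InSpanList
  simp only [length_rList]
  refine exists₃_congr fun l n i => and_congr_right fun _ => and_congr_right fun hn => ?_
  simp only [hget (hn _)]

lemma InSpanList.inSpan {k N : ℕ} {A : ℕ → ℕ → ℕ} {p : ℕ → ℕ}
    (h : InSpanList k (rList N A) p) : InSpan k A p := by
  obtain ⟨l, n, i, hn, -, hrest⟩ := inSpanList_rList_iff.1 h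
  exact ⟨l, n, i, hn, hrest⟩

lemma InSpan.eventually_inSpanList {k : ℕ} {A : ℕ → ℕ → ℕ} {p : ℕ → ℕ} (h : InSpan k A p) :
    ∀ᶠ N in Filter.atTop, InSpanList k (rList N A) p := by
  obtain ⟨l, n, i, hn, hrest⟩ := h
  refine Filter.eventually_atTop.2 ⟨n (Fin.last l) + 1, fun N hN => ?_⟩
  exact inSpanList_rList_iff.2 ⟨l, n, i, hn,
    fun j => (Nat.lt_succ_of_le (hn.monotone (Fin.le_last j))).trans_le hN, hrest⟩

lemma depth_spec {k : ℕ} {A : ℕ → ℕ → ℕ} {t : List (ℕ → ℕ)} (h : FinCond k t A) :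
    ∀ p ∈ t, InSpanList k (rList (depth k A t) A) p :=
  Nat.sInf_mem (s := {N | ∀ p ∈ t, InSpanList k (rList N A) p})
    ((Filter.eventually_all_finite t.finite_toSet).2
      fun p hp => (h.2 p hp).eventually_inSpanList).exists

lemma FinCond.of_rList_eq {k : ℕ} {A A' : ℕ → ℕ → ℕ} {t : List (ℕ → ℕ)} (h : FinCond k t A)
    (hpre : rList (depth k A t) A' = rList (depth k A t) A) : FinCond k t A' :=
  ⟨h.1, fun p hp => (hpre ▸ depth_spec h p hp).inSpan⟩

lemma depth_eq_of_rList_eq {k : ℕ} {A A' : ℕ → ℕ → ℕ} {t : List (ℕ → ℕ)} (h : FinCond k t A)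
    (hpre : rList (depth k A t) A' = rList (depth k A t) A) : depth k A' t = depth k A t := by
  have hle : depth k A' t ≤ depth k A t := Nat.sInf_le fun p hp => hpre ▸ depth_spec h p hp
  refine hle.antisymm (Nat.sInf_le fun p hp => ?_)
  rw [← rList_eq_of_le hpre hle]
  exact depth_spec (h.of_rList_eq hpre) p hp

lemma basic_mono {k : ℕ} {t : List (ℕ → ℕ)} {A B : ℕ → ℕ → ℕ} (hA : IsBlockSeq k A)
    (hB : IsBlockSeq k B) (hAB : Cond k A B) : Basic k t A ⊆ Basic k t B :=
  fun _ ⟨hC, hpre, hCA⟩ => ⟨hC, hpre, hCA.trans hA hB hAB⟩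

lemma mem_basic_rList_iff {k d : ℕ} {A A' B : ℕ → ℕ → ℕ} :
    B ∈ Basic k (rList d A) A' ↔ IsBlockSeq k B ∧ rList d B = rList d A ∧ Cond k B A' := by
  simp [Basic]

lemma mem_basic_rList_self {k d : ℕ} {A : ℕ → ℕ → ℕ} (hA : IsBlockSeq k A) :
    A ∈ Basic k (rList d A) A :=
  mem_basic_rList_iff.2 ⟨hA, rfl, Cond.refl k A⟩

lemma isFinBlockSeq_rList {k i : ℕ} {C : ℕ → ℕ → ℕ} (hC : IsBlockSeq k C) :
    IsFinBlockSeq k (rList i C) := by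
  have hget {x} (hx : x < i) : ((rList i C).getD x fun _ => 0) = C x := by
    rw [List.getD_eq_getElem _ _ (by simpa using hx), getElem_rList]
  refine ⟨fun p hp => ?_, fun m hm u v hu hv => ?_⟩
  · obtain ⟨x, -, rfl⟩ := mem_rList.1 hp
    exact hC.1 x
  · rw [length_rList] at hm
    rw [hget (by omega)] at hu
    rw [hget hm] at hv
    exact hC.2 m u v hu hv

lemma finCond_rList {k : ℕ} {C B : ℕ → ℕ → ℕ} (hC : IsBlockSeq k C) (hCB : Cond k C B) (i : ℕ) :
    FinCond k (rList i C) B := by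
  refine ⟨isFinBlockSeq_rList hC, fun p hp => ?_⟩
  obtain ⟨x, -, rfl⟩ := mem_rList.1 hp
  exact hCB x

lemma finCond_of_mem_basic {k : ℕ} {t : List (ℕ → ℕ)} {A C : ℕ → ℕ → ℕ}
    (hC : C ∈ Basic k t A) : FinCond k t A :=
  hC.2.1 ▸ finCond_rList hC.1 hC.2.2 t.length

lemma FinCond.of_cond {k : ℕ} {t : List (ℕ → ℕ)} {A B : ℕ → ℕ → ℕ} (ht : FinCond k t B)
    (hB : IsBlockSeq k B) (hA : IsBlockSeq k A) (hBA : Cond k B A) : FinCond k t A :=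
  ⟨ht.1, fun p hp => (ht.2 p hp).of_cond hB hA hBA⟩

lemma Coideal.exists_mem_basic {k : ℕ} (H : Coideal k) {E : ℕ → ℕ → ℕ} (hE : H.mem E)
    {t : List (ℕ → ℕ)} (ht : FinCond k t E) : ∃ B, H.mem B ∧ B ∈ Basic k t E := by
  obtain ⟨B, hB, hpre, htail⟩ := H.exists_mem_prefix hE ht.1
  have hBb := H.blockseq B hB
  exact ⟨B, hB, mem_basic_of_seqDrop hBb hpre ht.2 (htail B ⟨hBb, hpre, Cond.refl k B⟩)⟩

lemma mem_basic_depth_trans {k : ℕ} {t : List (ℕ → ℕ)} {A A' A'' : ℕ → ℕ → ℕ}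
    (ht : FinCond k t A) (hA : IsBlockSeq k A)
    (hA'' : A'' ∈ Basic k (rList (depth k A t) A) A)
    (hA' : A' ∈ Basic k (rList (depth k A'' t) A'') A'') :
    A' ∈ Basic k (rList (depth k A t) A) A := by
  obtain ⟨hA''b, hpre'', hA''A⟩ := mem_basic_rList_iff.1 hA''
  rw [depth_eq_of_rList_eq ht hpre''] at hA'
  obtain ⟨hA'b, hpre', hA'A''⟩ := mem_basic_rList_iff.1 hA'
  exact mem_basic_rList_iff.2 ⟨hA'b, hpre'.trans hpre'', hA'A''.trans hA''b hA hA''A⟩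

lemma Semiselective.exists_forall_finCond {k : ℕ} {H : Coideal k} (hH : Semiselective k H)
    {A : ℕ → ℕ → ℕ} (hA : H.mem A) (P : List (ℕ → ℕ) → (ℕ → ℕ → ℕ) → Prop)
    (hP : ∀ b B B', Basic k b B ⊆ Basic k b B' → P b B' → P b B)
    (hdense : ∀ b A'', H.mem A'' → Cond k A'' A → FinCond k b A'' →
      ∃ A', H.mem A' ∧ A' ∈ Basic k (rList (depth k A'' b) A'') A'' ∧ P b A') :
    ∃ B, H.mem B ∧ Cond k B A ∧ ∀ b, FinCond k b B → P b B := by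
  have hAb := H.blockseq A hA
  set S := fun b => {B | H.mem B} ∩ Basic k (rList (depth k A b) A) A
  have hD (b) (hb : FinCond k b A) : DenseOpenIn k {A' ∈ S b | P b A'} (S b) := by
    refine ⟨Set.sep_subset _ _, fun A'' ⟨hA''H, hA''⟩ => ?_, fun A' B' hA' hB' hA'B' =>
      ⟨hA', hP b A' B' (basic_mono (H.blockseq A' hA'.1) (H.blockseq B' hB'.1.1) hA'B') hB'.2⟩⟩
    obtain ⟨-, hpre, hA''A⟩ := mem_basic_rList_iff.1 hA''
    obtain ⟨A', hA'H, hA', hPA'⟩ := hdense b A'' hA''H hA''A (hb.of_rList_eq hpre)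
    exact ⟨A', ⟨⟨hA'H, mem_basic_depth_trans hb hAb hA'' hA'⟩, hPA'⟩, hA'.2.2⟩
  obtain ⟨B, hB, hBA, As, hAsD, hAs⟩ := hH A hA _ hD A hA (Cond.refl k A)
  exact ⟨B, hB, hBA, fun b hb =>
    hP b B (As b) (hAs b hb) (hAsD b (hb.of_cond (H.blockseq B hB) hAb hBA)).2⟩

def IsMetricOpen (Y : Set (ℕ → ℕ → ℕ)) : Prop :=
  ∀ C ∈ Y, ∃ n, ∀ D, rList n D = rList n C → D ∈ Y

lemma isMetricOpen_setOf_rList_mem (F : Set (List (ℕ → ℕ))) :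
    IsMetricOpen {A | ∃ n, rList n A ∈ F} :=
  fun _ ⟨n, hn⟩ => ⟨n, fun _ hD => ⟨n, hD ▸ hn⟩⟩

lemma IsMetricOpen.preimage_seqAppend {Y : Set (ℕ → ℕ → ℕ)} (hY : IsMetricOpen Y)
    (t : List (ℕ → ℕ)) : IsMetricOpen {C | seqAppend t C ∈ Y} := by
  intro C hC
  obtain ⟨n, hn⟩ := hY _ hC
  refine ⟨n, fun D hD => hn _ (rList_congr fun x hx => ?_)⟩
  by_cases h : x < t.length
  · simp [seqAppend_of_lt h]
  · simp only [seqAppend, h, dite_false]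
    exact apply_eq_of_rList_eq hD (by omega)

def Accepts (k : ℕ) (Y : Set (ℕ → ℕ → ℕ)) (t : List (ℕ → ℕ)) (A : ℕ → ℕ → ℕ) : Prop :=
  Basic k t A ⊆ Y

def Rejects {k : ℕ} (H : Coideal k) (Y : Set (ℕ → ℕ → ℕ)) (t : List (ℕ → ℕ))
    (A : ℕ → ℕ → ℕ) : Prop :=
  ∀ B, H.mem B → B ∈ Basic k t A → ¬ Accepts k Y t B

section Ramsey

variable {k : ℕ} {H : Coideal k} {Y : Set (ℕ → ℕ → ℕ)}

lemma exists_forall_accepts_or_rejects (hH : Semiselective k H) {A : ℕ → ℕ → ℕ}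
    (hA : H.mem A) : ∃ B, H.mem B ∧ Cond k B A ∧
      ∀ b, FinCond k b B → Accepts k Y b B ∨ Rejects H Y b B := by
  refine hH.exists_forall_finCond hA _ (fun b B B' hBB' => Or.imp (hBB'.trans)
    fun h B₃ hB₃ hB₃B => h B₃ hB₃ (hBB' hB₃B)) fun b A'' hA'' _ hb => ?_
  by_cases hrej : Rejects H Y b A''
  · exact ⟨A'', hA'', mem_basic_rList_self (H.blockseq A'' hA''), Or.inr hrej⟩
  simp only [Rejects, not_forall, not_not] at hrej
  obtain ⟨B, hB, hBb, hacc⟩ := hrej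
  obtain ⟨A', hA', hA'b, -, hsub⟩ :=
    H.a3_2 A'' hA'' b hb B hB hBb.2.2 ⟨B, hBb.1, hBb.2.1, Cond.refl k B⟩
  exact ⟨A', hA', hA'b, Or.inl (hsub.trans hacc)⟩

lemma exists_forall_accepts_or_not_accepts_succ (hH : Semiselective k H) {B₁ : ℕ → ℕ → ℕ}
    (hB₁ : H.mem B₁) : ∃ B, H.mem B ∧ Cond k B B₁ ∧ ∀ t, FinCond k t B →
      Accepts k Y t B ∨ ∀ C ∈ Basic k t B, ¬ Accepts k Y (rList (t.length + 1) C) B₁ := by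
  refine hH.exists_forall_finCond hB₁ _ (fun b B B' hBB' => Or.imp (hBB'.trans)
    fun h C hC => h C (hBB' hC)) fun b A'' hA'' hA''B₁ hb => ?_
  obtain ⟨B, hB, hBb, hsub | hdisj⟩ := H.a4 A'' hA'' b hb {c | Accepts k Y c B₁}
  · refine ⟨B, hB, hBb, Or.inl fun C hC => hsub ⟨C, hC, rfl⟩ ⟨hC.1, by simp, ?_⟩⟩
    exact (hC.2.2.trans (H.blockseq B hB) (H.blockseq A'' hA'') hBb.2.2).trans
      (H.blockseq A'' hA'') (H.blockseq B₁ hB₁) hA''B₁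
  · exact ⟨B, hB, hBb, Or.inr fun C hC hacc => hdisj.subset ⟨⟨C, hC, rfl⟩, hacc⟩⟩

lemma rejects_rList {B₁ B₂ : ℕ → ℕ → ℕ} (hB₁ : H.mem B₁) (hB₂ : H.mem B₂)
    (hB₂B₁ : Cond k B₂ B₁) (hdec₁ : ∀ b, FinCond k b B₁ → Accepts k Y b B₁ ∨ Rejects H Y b B₁)
    (hdec₂ : ∀ t, FinCond k t B₂ →
      Accepts k Y t B₂ ∨ ∀ C ∈ Basic k t B₂, ¬ Accepts k Y (rList (t.length + 1) C) B₁)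
    (hrej : Rejects H Y [] B₁) {C : ℕ → ℕ → ℕ} (hC : C ∈ Basic k [] B₂) :
    ∀ i, Rejects H Y (rList i C) B₁ := by
  have hB₁b := H.blockseq B₁ hB₁
  have hB₂b := H.blockseq B₂ hB₂
  intro i
  induction i with
  | zero => exact hrej
  | succ i ih =>
    rcases hdec₂ _ (finCond_rList hC.1 hC.2.2 i) with hacc | hnot
    · obtain ⟨A₃, hA₃, hA₃C⟩ := H.exists_mem_basic hB₂ (finCond_rList hC.1 hC.2.2 i)
      exact (ih A₃ hA₃ (basic_mono hB₂b hB₁b hB₂B₁ hA₃C)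
        ((basic_mono (H.blockseq A₃ hA₃) hB₂b hA₃C.2.2).trans hacc)).elim
    · have := hnot C ⟨hC.1, by simp, hC.2.2⟩
      rw [length_rList] at this
      exact (hdec₁ _ (finCond_rList hC.1 (hC.2.2.trans hB₂b hB₁b hB₂B₁) _)).resolve_left this

lemma IsMetricOpen.exists_not_rejects (hY : IsMetricOpen Y) {B C : ℕ → ℕ → ℕ} (hB : H.mem B)
    (hC : IsBlockSeq k C) (hCB : Cond k C B) (hCY : C ∈ Y) : ∃ n, ¬ Rejects H Y (rList n C) B := by
  obtain ⟨n, hn⟩ := hY C hCY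
  obtain ⟨A₃, hA₃, hA₃C⟩ := H.exists_mem_basic hB (finCond_rList hC hCB n)
  exact ⟨n, fun hrej => hrej A₃ hA₃ hA₃C fun D hD => hn D (by simpa using hD.2.1)⟩

theorem Semiselective.exists_cond_homogeneous_nil (hH : Semiselective k H) (hY : IsMetricOpen Y)
    {A : ℕ → ℕ → ℕ} (hA : H.mem A) :
    ∃ B, H.mem B ∧ Cond k B A ∧ (Basic k [] B ⊆ Y ∨ Basic k [] B ∩ Y = ∅) := by
  obtain ⟨B₁, hB₁, hB₁A, hdec₁⟩ := exists_forall_accepts_or_rejects (Y := Y) hH hA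
  rcases hdec₁ [] ⟨⟨by simp, by simp⟩, by simp⟩ with hacc | hrej
  · exact ⟨B₁, hB₁, hB₁A, Or.inl hacc⟩
  obtain ⟨B₂, hB₂, hB₂B₁, hdec₂⟩ := exists_forall_accepts_or_not_accepts_succ (Y := Y) hH hB₁
  refine ⟨B₂, hB₂, hB₂B₁.trans (H.blockseq B₁ hB₁) (H.blockseq A hA) hB₁A, Or.inr ?_⟩
  refine Set.eq_empty_of_forall_notMem fun C ⟨hC, hCY⟩ => ?_
  obtain ⟨n, hn⟩ := hY.exists_not_rejects hB₁ hC.1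
    (hC.2.2.trans (H.blockseq B₂ hB₂) (H.blockseq B₁ hB₁) hB₂B₁) hCY
  exact hn (rejects_rList hB₁ hB₂ hB₂B₁ hdec₁ hdec₂ hrej hC n)

end Ramsey

/-- Every metrically open subset of `FIN_k^∞` (a union of basic sets `[b]`)
is `H`-Ramsey, for every semiselective coideal `H`. -/
theorem open_H_Ramsey (k : ℕ) (H : Coideal k) (hH : Semiselective k H)
    (X : Set (ℕ → ℕ → ℕ))
    (hX : ∃ F : Set (List (ℕ → ℕ)), X = {A | ∃ n, rList n A ∈ F})
    (a : List (ℕ → ℕ)) (A : ℕ → ℕ → ℕ) (hA : H.mem A)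
    (hne : (Basic k a A).Nonempty) :
    ∃ B, H.mem B ∧ B ∈ Basic k a A ∧
      (Basic k a B ⊆ X ∨ Basic k a B ∩ X = ∅) := by
  obtain ⟨F, rfl⟩ := hX
  have ha : FinCond k a A := finCond_of_mem_basic hne.some_mem
  obtain ⟨B₀, hB₀, hB₀A, hhom⟩ := hH.exists_cond_homogeneous_nil
    ((isMetricOpen_setOf_rList_mem F).preimage_seqAppend a) hA
  obtain ⟨B, hB, hBa, htail⟩ := H.exists_mem_prefix hB₀ ha.1
  have hBb := H.blockseq B hB
  have hdrop (C) (hC : C ∈ Basic k a B) : seqDrop a.length C ∈ Basic k [] B₀ :=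
    ⟨isBlockSeq_seqDrop hC.1 _, rfl, htail C hC⟩
  have happend (C) (hC : C ∈ Basic k a B) : seqAppend a (seqDrop a.length C) = C := by
    simpa only [hC.2.1] using seqAppend_rList_seqDrop a.length C
  refine ⟨B, hB, mem_basic_of_seqDrop hBb hBa ha.2 ((htail B ⟨hBb, hBa, Cond.refl k B⟩).trans
    (H.blockseq B₀ hB₀) (H.blockseq A hA) hB₀A), ?_⟩
  rcases hhom with hsub | hdisj
  · exact Or.inl fun C hC => happend C hC ▸ hsub (hdrop C hC)
  · exact Or.inr (Set.eq_empty_of_forall_notMem fun C ⟨hC, hCX⟩ =>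
      hdisj.subset ⟨hdrop C hC, show seqAppend a _ ∈ _ by rwa [happend C hC]⟩)

end FINkSpace
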